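/- arXiv:2406.00058 — 3 statements merged into one kernel-verified Lean document; each statement's English description precedes it below -/
import Mathlib

section
/- Let y divide x, and let a be an element of the interval Q(y,x) = {a : y ∣ a ∧ a ∣ x}. Define ¬a to be the number whose p-adic valuation at each prime p equals the valuation of x if the valuation of a equals that of y, and equals the valuation of y otherwise. Then ¬a lies in Q(y,x), gcd(a, ¬a) = y, and ¬a is the greatest such element: for any c in Q(y,x) with gcd(a, c) = y, c divides ¬a. -/
private lemma dvd_of_val_le {m n : ℕ} (hm : 0 < m) (hn : 0 < n)
    (h : ∀ p : ℕ, p.Prime → padicValNat p m ≤ padicValNat p n) : m ∣ n := by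
  rw [← Nat.factorization_le_iff_dvd hm.ne' hn.ne']
  intro p
  by_cases hp : p.Prime
  · simpa [Nat.factorization_def _ hp] using h p hp
  · simp [Nat.factorization_eq_zero_of_not_prime _ hp]

private lemma val_le_of_dvd {m n : ℕ} (hn : 0 < n) (h : m ∣ n) (p : ℕ) (hp : p.Prime) :
    padicValNat p m ≤ padicValNat p n := by
  rcases Nat.eq_zero_or_pos m with rfl | hm
  · exact absurd (Nat.eq_zero_of_zero_dvd h) hn.ne'
  have := (Nat.factorization_le_iff_dvd hm.ne' hn.ne').mpr h p
  simpa [Nat.factorization_def _ hp] using this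

theorem pseudocomplement_in_divisibility_interval
    (x y a na : ℕ) (hx : 0 < x) (hy : 0 < y) (ha : 0 < a) (hna : 0 < na)
    (hyx : y ∣ x) (hya : y ∣ a) (hax : a ∣ x)
    (hval : ∀ p : ℕ, p.Prime →
      padicValNat p na =
        if padicValNat p a = padicValNat p y then padicValNat p x else padicValNat p y) :
    (y ∣ na ∧ na ∣ x) ∧ Nat.gcd a na = y ∧
    (∀ c : ℕ, y ∣ c → c ∣ x → Nat.gcd a c = y → c ∣ na) := by
  have hya' := val_le_of_dvd ha hya
  have hax' := val_le_of_dvd hx hax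
  have hyx' := val_le_of_dvd hx hyx
  refine ⟨⟨?_, ?_⟩, ?_, ?_⟩
  · refine dvd_of_val_le hy hna fun p hp => ?_
    rw [hval p hp]
    split
    · exact hyx' p hp
    · exact le_rfl
  · refine dvd_of_val_le hna hx fun p hp => ?_
    rw [hval p hp]
    split
    · exact le_rfl
    · exact hyx' p hp
  · have hg : 0 < Nat.gcd a na := Nat.gcd_pos_of_pos_left _ ha
    refine Nat.dvd_antisymm ?_ (Nat.dvd_gcd hya ?_)
    · refine dvd_of_val_le hg hy fun p hp => ?_
      have hgcd : padicValNat p (Nat.gcd a na) = min (padicValNat p a) (padicValNat p na) := by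
        have := Nat.factorization_gcd ha.ne' hna.ne'
        have := congrFun (congrArg (↑·) this) p
        simpa [Nat.factorization_def _ hp] using this
      rw [hgcd, hval p hp]
      by_cases h : padicValNat p a = padicValNat p y
      · simp only [if_pos h, h]
        exact min_le_left _ _
      · simp only [if_neg h]
        exact min_le_right _ _
    · refine dvd_of_val_le hy hna fun p hp => ?_
      rw [hval p hp]
      split
      · exact hyx' p hp
      · exact le_rfl
  · intro c hyc hcx hgc
    have hc : 0 < c := Nat.pos_of_dvd_of_pos hcx hx
    refine dvd_of_val_le hc hna fun p hp => ?_
    rw [hval p hp]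
    by_cases h : padicValNat p a = padicValNat p y
    · rw [if_pos h]
      exact val_le_of_dvd hx hcx p hp
    · rw [if_neg h]
      have hgcd : padicValNat p y = min (padicValNat p a) (padicValNat p c) := by
        rw [← hgc]
        have := Nat.factorization_gcd ha.ne' hc.ne'
        have := congrFun (congrArg (↑·) this) p
        simpa [Nat.factorization_def _ hp] using this
      have hlt : padicValNat p y < padicValNat p a := lt_of_le_of_ne (hya' p hp) (Ne.symm h)
      omega
end

section
/- Let y divide x and suppose that for every prime p, the p-adic valuation of x exceeds that of y by at most 1. Then for every a in Q(y,x) = {c : y ∣ c ∧ c ∣ x}, setting ¬a = x·y/a, we have gcd(a, ¬a) = y and lcm(a, ¬a) = x; i.e., the interval lattice is Boolean. -/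
theorem interval_boolean_of_val_diff_le_one
    (x y : ℕ) (hx : 0 < x) (hy : 0 < y) (hyx : y ∣ x)
    (h : ∀ p : ℕ, p.Prime → padicValNat p x ≤ padicValNat p y + 1) :
    ∀ a : ℕ, y ∣ a → a ∣ x →
      Nat.gcd a (x * y / a) = y ∧ Nat.lcm a (x * y / a) = x := by
  intro a hya hax
  set b := x * y / a with hbdef
  have ha0 : 0 < a := Nat.pos_of_dvd_of_pos hax hx
  have haxy : a ∣ x * y := hax.mul_right y
  have hab : a * b = x * y := Nat.mul_div_cancel' haxy
  have hb0 : 0 < b := by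
    rcases Nat.eq_zero_or_pos b with h0 | h0
    · rw [h0, mul_zero] at hab
      exact absurd hab.symm (by positivity)
    · exact h0
  -- y ∣ b and b ∣ x
  have hax' := hax
  obtain ⟨k, hk⟩ := hax'
  have hkb : b = k * y := by
    have : a * b = a * (k * y) := by rw [hab, hk]; ring
    exact Nat.eq_of_mul_eq_mul_left ha0 this
  have hyb : y ∣ b := ⟨k, by rw [hkb, mul_comm]⟩
  have hbx : b ∣ x := by
    obtain ⟨m, hm⟩ := hya
    exact ⟨m, by rw [hkb, hk, hm]; ring⟩
  -- valuation facts per prime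
  have key : ∀ p : ℕ,
      min (a.factorization p) (b.factorization p) = y.factorization p ∧
      max (a.factorization p) (b.factorization p) = x.factorization p := by
    intro p
    by_cases hp : p.Prime
    · have hsum : a.factorization p + b.factorization p
          = x.factorization p + y.factorization p := by
        have := congrArg Nat.factorization hab
        rw [Nat.factorization_mul ha0.ne' hb0.ne',
            Nat.factorization_mul hx.ne' hy.ne'] at this
        simpa using congrFun (congrArg DFunLike.coe this) p
      have h1 : y.factorization p ≤ a.factorization p :=
        (Nat.factorization_le_iff_dvd hy.ne' ha0.ne').2 hya p
      have h2 : y.factorization p ≤ b.factorization p :=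
        (Nat.factorization_le_iff_dvd hy.ne' hb0.ne').2 hyb p
      have h3 : a.factorization p ≤ x.factorization p :=
        (Nat.factorization_le_iff_dvd ha0.ne' hx.ne').2 hax p
      have h4 : b.factorization p ≤ x.factorization p :=
        (Nat.factorization_le_iff_dvd hb0.ne' hx.ne').2 hbx p
      have h5 : x.factorization p ≤ y.factorization p + 1 := by
        rw [Nat.factorization_def _ hp, Nat.factorization_def _ hp]
        exact h p hp
      omega
    · simp [Nat.factorization_eq_zero_of_not_prime _ hp]
  constructor
  · apply Nat.eq_of_factorization_eq (Nat.gcd_pos_of_pos_left _ ha0).ne' hy.ne'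
    intro p
    rw [Nat.factorization_gcd ha0.ne' hb0.ne']
    simpa using (key p).1
  · apply Nat.eq_of_factorization_eq (Nat.lcm_pos ha0 hb0).ne' hx.ne'
    intro p
    rw [Nat.factorization_lcm ha0.ne' hb0.ne']
    simpa using (key p).2
end

section
/- Let y divide x. If for every a in Q(y,x) = {c : y ∣ c ∧ c ∣ x} the element x·y/a lies in Q(y,x) and satisfies lcm(a, x·y/a) = x and gcd(a, x·y/a) = y, then for every prime p the p-adic valuation of x exceeds that of y by at most 1. -/
theorem val_diff_le_one_of_interval_boolean
    (x y : ℕ) (hx : 0 < x) (hy : 0 < y) (hyx : y ∣ x)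
    (h : ∀ a : ℕ, y ∣ a → a ∣ x →
      (y ∣ x * y / a ∧ x * y / a ∣ x) ∧
      Nat.lcm a (x * y / a) = x ∧ Nat.gcd a (x * y / a) = y) :
    ∀ p : ℕ, p.Prime → padicValNat p x ≤ padicValNat p y + 1 := by
  intro p hp
  haveI := Fact.mk hp
  by_contra hlt
  push_neg at hlt
  set vy := padicValNat p y with hvy
  have hv2 : vy + 2 ≤ padicValNat p x := hlt
  have hpow : p ^ (vy + 2) ∣ x := by
    rw [padicValNat_dvd_iff]
    right; exact hv2
  have hpx : p ∣ x := dvd_trans (dvd_pow_self p (by omega)) hpow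
  have hppos : 0 < p := hp.pos
  -- a = y * p divides x
  have hax : y * p ∣ x := by
    rw [← Nat.factorization_le_iff_dvd (by positivity) hx.ne']
    intro q
    rw [Nat.factorization_mul hy.ne' hppos.ne', Finsupp.add_apply]
    by_cases hq : q = p
    · subst hq
      have : q.factorization q = 1 := by
        simp [Nat.Prime.factorization hp]
      rw [this]
      have h1 : y.factorization q = vy := by
        simp [hvy, Nat.factorization_def _ hp]
      have h2 : padicValNat q x = x.factorization q := by
        simp [Nat.factorization_def _ hp]
      omega
    · have h0 : p.factorization q = 0 := by
        rw [Nat.Prime.factorization hp, Finsupp.single_apply]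
        simp [Ne.symm hq]
      have hle : y.factorization ≤ x.factorization :=
        (Nat.factorization_le_iff_dvd hy.ne' hx.ne').mpr hyx
      have := hle q
      omega
  -- b = x / p
  have hb : x * y / (y * p) = x / p := by
    have hxy : x * y = (x / p) * (y * p) := by
      rw [show (x / p) * (y * p) = (x / p * p) * y by ring, Nat.div_mul_cancel hpx]
    rw [hxy, Nat.mul_div_cancel _ (Nat.mul_pos hy hppos)]
  obtain ⟨_, _, hgcd⟩ := h (y * p) (dvd_mul_right y p) hax
  rw [hb] at hgcd
  have h1 : p ^ (vy + 1) ∣ y * p := by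
    obtain ⟨c, hc⟩ := pow_padicValNat_dvd (p := p) (n := y)
    exact ⟨c, by rw [hc]; ring⟩
  have h2 : p ^ (vy + 1) ∣ x / p := by
    obtain ⟨c, hc⟩ := hpow
    refine ⟨c, ?_⟩
    rw [hc, pow_succ, pow_succ]
    rw [show p ^ vy * p * p * c = (p ^ vy * p * c) * p by ring, Nat.mul_div_cancel _ hppos]
  have h3 : p ^ (vy + 1) ∣ y := hgcd ▸ Nat.dvd_gcd h1 h2
  rw [padicValNat_dvd_iff] at h3
  omega
end
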